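/- arXiv:2604.20298 — 2 statements merged into one kernel-verified Lean document; each statement's English description precedes it below -/
import Mathlib

section
/- Let X be a finite group with an abelian Sylow p-subgroup P. If R is a subgroup of P and x ∈ X satisfies R^x ⊆ P, then there exists y ∈ N_X(P) such that u^x = u^y for all u ∈ R (Burnside fusion argument for abelian Sylow subgroups). -/
open Subgroup

namespace Sylow

variable {p : ℕ} [Fact p.Prime] {G : Type*} [Group G] [Finite (Sylow p G)]

/-- Both `P` and `g • P` are Sylow subgroups of `C_G(S)`, so some `h ∈ C_G(S)` conjugates one
to the other; then `h * g` normalizes `P` and induces the same conjugation on `S` as `g`. -/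
theorem exists_mem_normalizer_conj_eq_of_subset_centralizer (P : Sylow p G) {S : Set G} (g : G)
    (hS : S ⊆ centralizer (P : Set G)) (hgS : ∀ s ∈ S, g⁻¹ * s * g ∈ centralizer (P : Set G)) :
    ∃ n ∈ normalizer (P : Set G), ∀ s ∈ S, g⁻¹ * s * g = n⁻¹ * s * n := by
  have hP : (P : Subgroup G) ≤ centralizer S := fun k hk s hs => (hS hs k hk).symm
  have hgP : ((g • P : Sylow p G) : Subgroup G) ≤ centralizer S := by
    rintro - ⟨k, hk, rfl⟩ s hs
    have hcomm : k * (g⁻¹ * s * g) = g⁻¹ * s * g * k := hgS s hs k hk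
    change s * (g * k * g⁻¹) = g * k * g⁻¹ * s
    calc s * (g * k * g⁻¹) = g * ((g⁻¹ * s * g) * k) * g⁻¹ := by group
      _ = g * (k * (g⁻¹ * s * g)) * g⁻¹ := by rw [hcomm]
      _ = g * k * g⁻¹ * s := by group
  obtain ⟨h, hh⟩ := MulAction.exists_smul_eq (centralizer S) ((g • P).subtype hgP) (P.subtype hP)
  simp_rw [smul_subtype, Subgroup.smul_def, smul_smul] at hh
  refine ⟨h * g, smul_eq_iff_mem_normalizer.mp (subtype_injective hh), fun s hs => ?_⟩
  have hhs : s * h = h * s := h.2 s hs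
  calc g⁻¹ * s * g = g⁻¹ * (h : G)⁻¹ * (s * h) * g := by rw [hhs]; group
    _ = (h * g)⁻¹ * s * (h * g) := by group

theorem exists_mem_normalizer_conj_eq_of_subset (P : Sylow p G) [IsMulCommutative P] {S : Set G}
    (g : G) (hS : S ⊆ P) (hgS : ∀ s ∈ S, g⁻¹ * s * g ∈ P) :
    ∃ n ∈ normalizer (P : Set G), ∀ s ∈ S, g⁻¹ * s * g = n⁻¹ * s * n :=
  P.exists_mem_normalizer_conj_eq_of_subset_centralizer g (fun _ hs => P.le_centralizer (hS hs))
    (fun s hs => P.le_centralizer (hgS s hs))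

end Sylow

/-- Burnside fusion argument for abelian Sylow subgroups: if `P` is an abelian Sylow
`p`-subgroup of a finite group `X`, `R ≤ P` and `x ∈ X` satisfies `R^x ⊆ P`, then there is
`y ∈ N_X(P)` with `u^x = u^y` for all `u ∈ R`. -/
theorem stmt_7 {p : ℕ} [Fact p.Prime] {X : Type*} [Group X] [Finite X]
    (P : Sylow p X) (hab : ∀ a b : X, a ∈ P → b ∈ P → a * b = b * a)
    (R : Subgroup X) (hR : R ≤ (P : Subgroup X)) (x : X)
    (hx : ∀ u ∈ R, x⁻¹ * u * x ∈ (P : Subgroup X)) :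
    ∃ y ∈ Subgroup.normalizer ((P : Subgroup X) : Set X), ∀ u ∈ R, x⁻¹ * u * x = y⁻¹ * u * y := by
  have : IsMulCommutative (P : Subgroup X) :=
    le_centralizer_iff_isMulCommutative.mp fun a ha b hb => hab b a hb ha
  exact P.exists_mem_normalizer_conj_eq_of_subset x (fun _ hu => hR hu) hx
end

section
/- Let A be a G-graded algebra over a commutative ring that is a crossed product (each graded component A_g contains an invertible element). If φ : A → A' is a graded homomorphism of G-graded crossed products that is surjective on the identity component A_1 → A'_1 and both are crossed products of the same finite group G with A_g free of the same rank as A'_g, then φ is an isomorphism. More simply: a graded algebra homomorphism between crossed products of G which restricts to an isomorphism on identity components is an isomorphism. -/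
/-- In a graded ring over an additive group, the inverse of a homogeneous unit is
homogeneous of the opposite degree. -/
lemma unit_inv_mem {ι R A : Type*} [AddGroup ι] [DecidableEq ι]
    [CommRing R] [Ring A] [Algebra R A] (𝒜 : ι → Submodule R A) [GradedRing 𝒜]
    (u : Aˣ) (g : ι) (hu : (u : A) ∈ 𝒜 g) : ((u⁻¹ : Aˣ) : A) ∈ 𝒜 (-g) := by
  classical
  set x : A := ((u⁻¹ : Aˣ) : A) with hx
  have hzero : ∀ i : ι, i ≠ -g → (DirectSum.decompose 𝒜 x i : A) = 0 := by
    intro i hi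
    have hmul : (DirectSum.decompose 𝒜 ((u : A) * x) (g + i) : A)
        = (u : A) * (DirectSum.decompose 𝒜 x i : A) := by
      lift (u : A) to 𝒜 g using hu with u' hu'
      rw [DirectSum.decompose_mul, DirectSum.decompose_coe,
        DirectSum.coe_of_mul_apply_add]
    have h1 : (u : A) * x = 1 := u.mul_inv
    have hne : g + i ≠ 0 := fun h => hi (eq_neg_of_add_eq_zero_right h)
    rw [h1] at hmul
    have : (DirectSum.decompose 𝒜 (1 : A) (g + i) : A) = 0 :=
      DirectSum.decompose_of_mem_ne 𝒜 (SetLike.one_mem_graded 𝒜) (Ne.symm hne)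
    rw [this] at hmul
    exact (Units.mul_right_eq_zero u).mp hmul.symm
  have := DirectSum.sum_support_decompose 𝒜 x
  rw [← this]
  apply Submodule.sum_mem
  intro i hi
  by_cases h : i = -g
  · subst h; exact SetLike.coe_mem _
  · rw [hzero i h]; exact Submodule.zero_mem _

/-- Every element of a graded ring with finite grading group is the sum of its
homogeneous components over all degrees. -/
lemma sum_decompose_univ {ι R A : Type*} [AddMonoid ι] [Fintype ι] [DecidableEq ι]
    [CommRing R] [Ring A] [Algebra R A] (𝒜 : ι → Submodule R A) [GradedRing 𝒜]
    (a : A) : ∑ i : ι, (DirectSum.decompose 𝒜 a i : A) = a := by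
  classical
  conv_rhs => rw [← DirectSum.sum_support_decompose 𝒜 a]
  exact (Finset.sum_subset (Finset.subset_univ _) fun i _ hi => by
    simp only [DFinsupp.mem_support_iff, not_not] at hi; rw [hi]; rfl).symm

/-- Uniqueness of homogeneous decompositions: if homogeneous elements of each degree
sum to zero, they all vanish. -/
lemma eq_zero_of_sum_eq_zero {ι R A : Type*} [AddMonoid ι] [Fintype ι] [DecidableEq ι]
    [CommRing R] [Ring A] [Algebra R A] (𝒜 : ι → Submodule R A) [GradedRing 𝒜]
    (b : ι → A) (hb : ∀ i, b i ∈ 𝒜 i) (hsum : ∑ i, b i = 0) : ∀ j, b j = 0 := by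
  classical
  intro j
  have h1 : (DirectSum.decompose 𝒜 (∑ i, b i) j : A) = 0 := by
    rw [hsum]; simp
  have h2 : (DirectSum.decompose 𝒜 (∑ i, b i) j : A)
      = ∑ i, (DirectSum.decompose 𝒜 (b i) j : A) := by
    rw [DirectSum.decompose_sum]
    rw [DFinsupp.finset_sum_apply]
    push_cast
    rfl
  rw [h2, Finset.sum_eq_single j] at h1
  · rwa [DirectSum.decompose_of_mem_same 𝒜 (hb j)] at h1
  · intro i _ hij
    rw [DirectSum.decompose_of_mem_ne 𝒜 (hb i) hij]
  · intro h; exact absurd (Finset.mem_univ j) h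

/-- A graded algebra homomorphism between crossed products of a finite group `G`
(written additively as `ι`) which restricts to an isomorphism on identity components is
an isomorphism.  Here a `G`-graded algebra is a crossed product when every graded
component contains an invertible element. -/
theorem stmt_10 {ι R A A' : Type*} [AddGroup ι] [Finite ι] [DecidableEq ι]
    [CommRing R] [Ring A] [Algebra R A] [Ring A'] [Algebra R A']
    (𝒜 : ι → Submodule R A) (𝒜' : ι → Submodule R A')
    [GradedRing 𝒜] [GradedRing 𝒜']
    (hcp : ∀ g : ι, ∃ u : Aˣ, (u : A) ∈ 𝒜 g)
    (hcp' : ∀ g : ι, ∃ u : A'ˣ, (u : A') ∈ 𝒜' g)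
    (φ : A →ₐ[R] A')
    (hgraded : ∀ g : ι, ∀ a ∈ 𝒜 g, φ a ∈ 𝒜' g)
    (hinj₁ : ∀ a ∈ 𝒜 (0 : ι), φ a = 0 → a = 0)
    (hsurj₁ : ∀ b ∈ 𝒜' (0 : ι), ∃ a ∈ 𝒜 (0 : ι), φ a = b) :
    Function.Bijective φ := by
  classical
  cases nonempty_fintype ι
  -- injectivity on each component
  have compInj : ∀ g : ι, ∀ a ∈ 𝒜 g, φ a = 0 → a = 0 := by
    intro g a ha hφa
    obtain ⟨u, hu⟩ := hcp g
    have hinv : ((u⁻¹ : Aˣ) : A) ∈ 𝒜 (-g) := unit_inv_mem 𝒜 u g hu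
    have hmem : a * ((u⁻¹ : Aˣ) : A) ∈ 𝒜 (0 : ι) := by
      have := SetLike.mul_mem_graded ha hinv
      rwa [add_neg_cancel] at this
    have hφ0 : φ (a * ((u⁻¹ : Aˣ) : A)) = 0 := by
      rw [map_mul, hφa, zero_mul]
    have := hinj₁ _ hmem hφ0
    have : a * ((u⁻¹ : Aˣ) : A) * (u : A) = 0 := by rw [this, zero_mul]
    rwa [Units.inv_mul_cancel_right] at this
  -- surjectivity on each component
  have compSurj : ∀ g : ι, ∀ b ∈ 𝒜' g, ∃ a ∈ 𝒜 g, φ a = b := by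
    intro g b hb
    obtain ⟨u, hu⟩ := hcp g
    set v : A'ˣ := Units.map (φ : A →* A') u with hv
    have hvmem : (v : A') ∈ 𝒜' g := hgraded g _ hu
    have hvinv : ((v⁻¹ : A'ˣ) : A') ∈ 𝒜' (-g) := unit_inv_mem 𝒜' v g hvmem
    have hmem : b * ((v⁻¹ : A'ˣ) : A') ∈ 𝒜' (0 : ι) := by
      have := SetLike.mul_mem_graded hb hvinv
      rwa [add_neg_cancel] at this
    obtain ⟨a₀, ha₀, hφa₀⟩ := hsurj₁ _ hmem
    refine ⟨a₀ * (u : A), ?_, ?_⟩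
    · have := SetLike.mul_mem_graded ha₀ hu
      rwa [zero_add] at this
    · rw [map_mul, hφa₀]
      have : φ (u : A) = (v : A') := rfl
      rw [this, Units.inv_mul_cancel_right]
  constructor
  · -- injective
    have hker : ∀ a : A, φ a = 0 → a = 0 := by
      intro a ha
      have hcomp : ∀ i : ι, φ ((DirectSum.decompose 𝒜 a i : A)) = 0 := by
        apply eq_zero_of_sum_eq_zero 𝒜' (fun i => φ ((DirectSum.decompose 𝒜 a i : A)))
          (fun i => hgraded i _ (SetLike.coe_mem _))
        rw [← map_sum, sum_decompose_univ 𝒜 a, ha]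
      have : ∀ i : ι, (DirectSum.decompose 𝒜 a i : A) = 0 :=
        fun i => compInj i _ (SetLike.coe_mem _) (hcomp i)
      rw [← sum_decompose_univ 𝒜 a]
      exact Finset.sum_eq_zero fun i _ => this i
    intro x y hxy
    have : φ (x - y) = 0 := by rw [map_sub, hxy, sub_self]
    have := hker _ this
    exact sub_eq_zero.mp this
  · -- surjective
    intro b
    choose f hf hφf using fun i : ι => compSurj i (DirectSum.decompose 𝒜' b i : A')
      (SetLike.coe_mem _)
    refine ⟨∑ i, f i, ?_⟩
    rw [map_sum]
    calc ∑ i, φ (f i) = ∑ i, (DirectSum.decompose 𝒜' b i : A') :=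
          Finset.sum_congr rfl fun i _ => hφf i
      _ = b := sum_decompose_univ 𝒜' b
end
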